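/- Let D = (V, A) be the directed graph of a finite simple graph G = (V,E), with both arcs on each edge. Let z ∈ ℤ^A be a nonzero vector with z_{r(a)} = −z_a for all a ∈ A that is orthogonal to every cocycle vector (equivalently, for every vertex v, Σ_{w : v→w ∈ A} z_{v→w} = 0). Then there exists an elementary closed path (cycle) of D all of whose arcs a satisfy z_a > 0. -/

import Mathlib

/-
Call an arc positive if `z` is positive on it. If `u → v` is positive, the reversed arc
`v → u` is negative, so the vanishing out-flow at `v` forces a positive arc `v → w`. Hence every
vertex entered by a positive arc also leaves by one, and following positive arcs from such a
vertex defines a self-map of a finite set; a periodic orbit of that map is the required cycle.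
-/

open Finset

/-- The arcs of the directed graph `D = (V, A)` associated to a simple graph `G`. -/
abbrev Arc {V : Type*} (G : SimpleGraph V) : Type _ := {p : V × V // G.Adj p.1 p.2}

/-- The reversed arc. -/
def arcRev {V : Type*} {G : SimpleGraph V} (a : Arc G) : Arc G :=
  ⟨(a.1.2, a.1.1), a.2.symm⟩

namespace Function

theorem periodicPts_nonempty_of_finite {α : Type*} [Finite α] [Nonempty α] (f : α → α) :
    (periodicPts f).Nonempty := by
  obtain ⟨x⟩ := ‹Nonempty α›
  obtain ⟨m, n, hmn, heq⟩ := Finite.exists_ne_map_eq_of_infinite (f^[·] x)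
  wlog hlt : m < n generalizing m n
  · exact this n m hmn.symm heq.symm (hmn.lt_or_gt.resolve_left hlt)
  refine ⟨f^[m] x, mk_mem_periodicPts (n := n - m) (by omega) ?_⟩
  change f^[n - m] (f^[m] x) = f^[m] x
  rw [← iterate_add_apply, Nat.sub_add_cancel hlt.le, heq]

theorem exists_injective_orbit_cycle {α : Type*} [Finite α] [Nonempty α] (f : α → α) :
    ∃ (n : ℕ) (ω : Fin (n + 1) → α), Injective ω ∧ ∀ i, ω (i + 1) = f (ω i) := by
  obtain ⟨y, hy⟩ := periodicPts_nonempty_of_finite f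
  obtain ⟨n, hn⟩ := Nat.exists_eq_succ_of_ne_zero (minimalPeriod_pos_of_mem_periodicPts hy).ne'
  refine ⟨n, fun i => f^[i] y, fun i j hij => Fin.ext ?_, fun i => ?_⟩
  · exact iterate_injOn_Iio_minimalPeriod (hn ▸ i.isLt) (hn ▸ j.isLt) hij
  · have hval : ((i + 1 : Fin (n + 1)) : ℕ) = (i + 1) % minimalPeriod f y := by
      simp [Fin.val_add, hn]
    simp only [hval, iterate_mod_minimalPeriod_eq, iterate_succ_apply']

theorem exists_injective_cycle_of_exists_succ {V : Type*} [Finite V] {R : V → V → Prop}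
    (hR : ∃ u v, R u v) (hsucc : ∀ u v, R u v → ∃ w, R v w) :
    ∃ (n : ℕ) (ω : Fin (n + 1) → V), Injective ω ∧ ∀ i, R (ω i) (ω (i + 1)) := by
  obtain ⟨u, v, huv⟩ := hR
  have : Nonempty {v // ∃ u, R u v} := ⟨⟨v, u, huv⟩⟩
  choose next hnext using fun x : {v // ∃ u, R u v} => hsucc _ _ x.2.choose_spec
  obtain ⟨n, ω, hinj, hω⟩ := exists_injective_orbit_cycle
    fun x => (⟨next x, x.1, hnext x⟩ : {v // ∃ u, R u v})
  refine ⟨n, Subtype.val ∘ ω, Subtype.val_injective.comp hinj, fun i => ?_⟩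
  simpa only [comp_apply, hω] using hnext (ω i)

end Function

section PositiveArcs

variable {V : Type*} {G : SimpleGraph V}

def PosAdj (z : Arc G → ℤ) (v w : V) : Prop :=
  ∃ h : G.Adj v w, 0 < z ⟨(v, w), h⟩

theorem exists_posAdj_of_ne_zero {z : Arc G → ℤ} (hz : z ≠ 0)
    (hanti : ∀ a : Arc G, z (arcRev a) = - z a) : ∃ u v, PosAdj z u v := by
  obtain ⟨⟨⟨u, v⟩, h⟩, ha⟩ := Function.ne_iff.mp hz
  rcases (ha : z ⟨(u, v), h⟩ ≠ 0).lt_or_gt with hneg | hpos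
  · refine ⟨v, u, h.symm, ?_⟩
    change 0 < z (arcRev ⟨(u, v), h⟩)
    rw [hanti]
    exact neg_pos.mpr hneg
  · exact ⟨u, v, h, hpos⟩

theorem PosAdj.exists_posAdj [Fintype V] [DecidableEq V] [DecidableRel G.Adj]
    {z : Arc G → ℤ} (hanti : ∀ a : Arc G, z (arcRev a) = - z a)
    (hker : ∀ v : V, (∑ a ∈ univ.filter (fun a : Arc G => (a : V × V).1 = v), z a) = 0)
    {u v : V} (huv : PosAdj z u v) : ∃ w, PosAdj z v w := by
  obtain ⟨h, hpos⟩ := huv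
  by_contra! hnone
  refine (hker v).not_lt (Finset.sum_neg' ?_ ⟨arcRev ⟨(u, v), h⟩, by simp [arcRev], ?_⟩)
  · rintro ⟨⟨v', w⟩, h'⟩ hmem
    obtain rfl : v' = v := (Finset.mem_filter.mp hmem).2
    exact not_lt.mp fun hp => hnone w ⟨h', hp⟩
  · rw [hanti]
    exact neg_neg_of_pos hpos

end PositiveArcs

theorem stmt_10 {V : Type*} [Fintype V] [DecidableEq V]
    (G : SimpleGraph V) [DecidableRel G.Adj]
    (z : Arc G → ℤ) (hz : z ≠ 0)
    (hanti : ∀ a : Arc G, z (arcRev a) = - z a)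
    (hker : ∀ v : V, (∑ a ∈ univ.filter (fun a : Arc G => (a : V × V).1 = v), z a) = 0) :
    ∃ (n : ℕ) (ω : Fin (n + 1) → V) (h : ∀ i, G.Adj (ω i) (ω (i + 1))),
      Function.Injective ω ∧ ∀ i, 0 < z ⟨(ω i, ω (i + 1)), h i⟩ := by
  obtain ⟨n, ω, hinj, hcycle⟩ := Function.exists_injective_cycle_of_exists_succ
    (exists_posAdj_of_ne_zero hz hanti) fun _ _ => PosAdj.exists_posAdj hanti hker
  choose hadj hpos using hcycle
  exact ⟨n, ω, hadj, hinj, hpos⟩
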